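/- Let χ : [n] → {•, ∘} with χ^{-1}(∘) = {1 = l0 < l1 < ... < lm = n}, and let σ ≤ π in INC(χ) with π = {V1,...,Vt}. Then the Möbius function of the lattice INC(χ) factorizes over the blocks of π: μ_INC(σ, π) = Π_{s=1}^{t} μ_INC(σ|_{Vs}, 1_{Vs}), where 1_{Vs} is the one-block partition of Vs and μ_INC on the right is computed in the lattice INC(χ|_{Vs}). -/

import Mathlib

open scoped Classical

section Defs

variable {α : Type*}

/-- `P` is a partition of the finite set `S`: blocks are nonempty subsets of `S`
and every element of `S` lies in a unique block. -/
def IsPartitionOn (S : Finset α) (P : Finset (Finset α)) : Prop :=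
  (∀ B ∈ P, B.Nonempty ∧ B ⊆ S) ∧ ∀ x ∈ S, ∃! B, B ∈ P ∧ x ∈ B

/-- `P` is noncrossing: no `s₁ < r₁ < s₂ < r₂` with `s₁, s₂` in one block and
`r₁, r₂` in a different block. -/
def Noncrossing [LinearOrder α] (P : Finset (Finset α)) : Prop :=
  ∀ V ∈ P, ∀ W ∈ P, V ≠ W →
    ¬ ∃ s₁ r₁ s₂ r₂, s₁ ∈ V ∧ s₂ ∈ V ∧ r₁ ∈ W ∧ r₂ ∈ W ∧ s₁ < r₁ ∧ r₁ < s₂ ∧ s₂ < r₂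

/-- A block `V` is inner if some other block `W` has elements `s, t` with
`s < v < t` for all `v ∈ V`. -/
def IsInnerBlock [LinearOrder α] (P : Finset (Finset α)) (V : Finset α) : Prop :=
  ∃ W ∈ P, W ≠ V ∧ ∃ s ∈ W, ∃ t ∈ W, ∀ v ∈ V, s < v ∧ v < t

/-- `P` is an interval partition: no `s₁ < r < s₂` with `s₁, s₂` in one block
and `r` in a different block. -/
def IsIntervalPartition [LinearOrder α] (P : Finset (Finset α)) : Prop :=
  ∀ V ∈ P, ∀ W ∈ P, V ≠ W →
    ¬ ∃ s₁ r s₂, s₁ ∈ V ∧ s₂ ∈ V ∧ r ∈ W ∧ s₁ < r ∧ r < s₂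

/-- Reversed refinement order: every block of `P` is contained in a block of `Q`. -/
def Refines (P Q : Finset (Finset α)) : Prop := ∀ B ∈ P, ∃ C ∈ Q, B ⊆ C

/-- Noncrossing partition of the finite ordered set `S`. -/
def NCOn [LinearOrder α] (S : Finset α) (P : Finset (Finset α)) : Prop :=
  IsPartitionOn S P ∧ Noncrossing P

/-- Interval-noncrossing partition of `S` w.r.t. the coloring `χ`
(`χ k = true` means `k` is colored `∘`): a noncrossing partition such that
no `∘`-colored element lies in an inner block. -/
def INCOn [LinearOrder α] (S : Finset α) (χ : α → Bool) (P : Finset (Finset α)) : Prop :=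
  IsPartitionOn S P ∧ Noncrossing P ∧
    ∀ V ∈ P, IsInnerBlock P V → ∀ k ∈ V, χ k = false

/-- Restriction of a partition to a subset: nonempty intersections of blocks with `A`. -/
def restrictPart [DecidableEq α] (P : Finset (Finset α)) (A : Finset α) : Finset (Finset α) :=
  (P.image (· ∩ A)).filter (·.Nonempty)

end Defs

section Mobius

/-- `μ` is the Möbius function of the finite poset given by the relation `le`
restricted to the finite set `S`: it is a two-sided convolution inverse of
the zeta function. -/
def IsMobiusOn {β : Type*} (S : Finset β) (le : β → β → Prop) (μ : β → β → ℂ) : Prop :=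
  ∀ a ∈ S, ∀ b ∈ S, le a b →
    ((∑ c ∈ S.filter (fun c => le a c ∧ le c b), μ a c) = if a = b then 1 else 0) ∧
    ((∑ c ∈ S.filter (fun c => le a c ∧ le c b), μ c b) = if a = b then 1 else 0)

/-- The finite set of interval-noncrossing partitions of `S ⊆ [n]` w.r.t. `χ`. -/
noncomputable def INCset {n : ℕ} (S : Finset (Fin n)) (χ : Fin n → Bool) :
    Finset (Finset (Finset (Fin n))) :=
  Finset.univ.filter (fun Q => INCOn S χ Q)

/-- The finite set of noncrossing partitions of `S ⊆ [n]`. -/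
noncomputable def NCset {n : ℕ} (S : Finset (Fin n)) :
    Finset (Finset (Finset (Fin n))) :=
  Finset.univ.filter (fun Q => NCOn S Q)

end Mobius

/-!
Restriction to the blocks of `π` and gluing along them identify the interval `[σ, ρ]` of
`INC(χ)`, for `ρ ≤ π`, with the product of the intervals `[σ|V, ρ|V]` of the `INC(χ|V)`.
Gluing preserves the interval condition because an inner block of the glued partition is
inner either within its own `INC(χ|V)` or inside an inner block of `π`. Hence
`τ ↦ ∏_V μ_V(σ|V, τ|V)` satisfies the left recursion `∑_{σ ≤ τ ≤ ρ} f τ = δ(σ, ρ)` on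
`[σ, π]`, and inverting it against the right recursion of `μ` gives `μ(σ, π) = f π`.
-/

section Poset

variable {β : Type*}

noncomputable def relIcc (T : Finset β) (le : β → β → Prop) (a b : β) : Finset β :=
  T.filter fun c => le a c ∧ le c b

variable {T : Finset β} {le : β → β → Prop} {μ : β → β → ℂ}

theorem mem_relIcc {a b c : β} : c ∈ relIcc T le a b ↔ c ∈ T ∧ le a c ∧ le c b :=
  Finset.mem_filter

theorem IsMobiusOn.sum_relIcc_left [DecidableEq β] (hμ : IsMobiusOn T le μ)
    {a b : β} (ha : a ∈ T) (hb : b ∈ T) (hab : le a b) :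
    ∑ c ∈ relIcc T le a b, μ a c = if a = b then 1 else 0 :=
  (hμ a ha b hb hab).1.trans (by congr)

theorem IsMobiusOn.sum_relIcc_right [DecidableEq β] (hμ : IsMobiusOn T le μ)
    {a b : β} (ha : a ∈ T) (hb : b ∈ T) (hab : le a b) :
    ∑ c ∈ relIcc T le a b, μ c b = if a = b then 1 else 0 :=
  (hμ a ha b hb hab).2.trans (by congr)

theorem IsMobiusOn.eq_of_sum_relIcc_eq_ite [DecidableEq β] (hμ : IsMobiusOn T le μ)
    (hrefl : ∀ x ∈ T, le x x)
    (htrans : ∀ x ∈ T, ∀ y ∈ T, ∀ z ∈ T, le x y → le y z → le x z)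
    {a b : β} (ha : a ∈ T) (hb : b ∈ T) (hab : le a b) (f : β → ℂ)
    (hf : ∀ c ∈ relIcc T le a b, ∑ d ∈ relIcc T le a c, f d = if a = c then 1 else 0) :
    μ a b = f b := by
  calc μ a b = ∑ c ∈ relIcc T le a b, (if a = c then 1 else 0) * μ c b := by
        simp [Finset.sum_ite_eq, mem_relIcc, ha, hab, hrefl a ha]
    _ = ∑ c ∈ relIcc T le a b, ∑ d ∈ relIcc T le a c, f d * μ c b :=
        Finset.sum_congr rfl fun c hc => by rw [← hf c hc, Finset.sum_mul]
    _ = ∑ d ∈ relIcc T le a b, ∑ c ∈ relIcc T le d b, f d * μ c b := by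
        refine Finset.sum_comm' fun c d => ?_
        simp only [mem_relIcc]
        constructor
        · rintro ⟨⟨hc, hac, hcb⟩, hd, had, hdc⟩
          exact ⟨⟨hc, hdc, hcb⟩, hd, had, htrans d hd c hc b hb hdc hcb⟩
        · rintro ⟨⟨hc, hdc, hcb⟩, hd, had, hdb⟩
          exact ⟨⟨hc, htrans a ha d hd c hc had hdc, hcb⟩, hd, had, hdc⟩
    _ = ∑ d ∈ relIcc T le a b, f d * if d = b then 1 else 0 := by
        refine Finset.sum_congr rfl fun d hd => ?_
        obtain ⟨hdT, -, hdb⟩ := mem_relIcc.mp hd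
        rw [← Finset.mul_sum, hμ.sum_relIcc_right hdT hb hdb]
    _ = f b := by simp [mem_relIcc, hb, hab, hrefl b hb]

end Poset

section Partition

variable {α : Type*} {S V : Finset α} {P Q R σ τ π : Finset (Finset α)}

theorem Refines.refl (P : Finset (Finset α)) : Refines P P :=
  fun B hB => ⟨B, hB, subset_rfl⟩

theorem Refines.trans (hPQ : Refines P Q) (hQR : Refines Q R) : Refines P R := by
  intro B hB
  obtain ⟨C, hC, hBC⟩ := hPQ B hB
  obtain ⟨D, hD, hCD⟩ := hQR C hC
  exact ⟨D, hD, hBC.trans hCD⟩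

theorem IsPartitionOn.eq_of_mem (hπ : IsPartitionOn S π) {V W : Finset α} (hV : V ∈ π)
    (hW : W ∈ π) {x : α} (hxV : x ∈ V) (hxW : x ∈ W) : V = W := by
  obtain ⟨U, -, hU⟩ := hπ.2 x ((hπ.1 V hV).2 hxV)
  exact (hU V ⟨hV, hxV⟩).trans (hU W ⟨hW, hxW⟩).symm

theorem IsPartitionOn.subset_of_refines (hπ : IsPartitionOn S π) (hτπ : Refines τ π)
    (hV : V ∈ π) {B : Finset α} (hB : B ∈ τ) {x : α} (hxB : x ∈ B) (hxV : x ∈ V) : B ⊆ V := by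
  obtain ⟨W, hW, hBW⟩ := hτπ B hB
  rwa [← hπ.eq_of_mem hW hV (hBW hxB) hxV]

variable [DecidableEq α]

theorem restrictPart_eq_filter (hτ : IsPartitionOn S τ) (hπ : IsPartitionOn S π)
    (hτπ : Refines τ π) (hV : V ∈ π) : restrictPart τ V = τ.filter (· ⊆ V) := by
  ext C
  simp only [restrictPart, Finset.mem_filter, Finset.mem_image]
  constructor
  · rintro ⟨⟨B, hB, rfl⟩, x, hx⟩
    obtain ⟨hxB, hxV⟩ := Finset.mem_inter.mp hx
    have hBV := hπ.subset_of_refines hτπ hV hB hxB hxV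
    rw [Finset.inter_eq_left.mpr hBV]
    exact ⟨hB, hBV⟩
  · rintro ⟨hC, hCV⟩
    exact ⟨⟨C, hC, Finset.inter_eq_left.mpr hCV⟩, (hτ.1 C hC).1⟩

theorem restrictPart_subset (hτ : IsPartitionOn S τ) (hπ : IsPartitionOn S π)
    (hτπ : Refines τ π) (hV : V ∈ π) : restrictPart τ V ⊆ τ := by
  rw [restrictPart_eq_filter hτ hπ hτπ hV]
  exact Finset.filter_subset _ _

theorem IsPartitionOn.restrict (hτ : IsPartitionOn S τ) (hπ : IsPartitionOn S π)
    (hτπ : Refines τ π) (hV : V ∈ π) : IsPartitionOn V (restrictPart τ V) := by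
  rw [restrictPart_eq_filter hτ hπ hτπ hV]
  refine ⟨fun B hB => ⟨(hτ.1 B (Finset.mem_filter.mp hB).1).1, (Finset.mem_filter.mp hB).2⟩,
    fun x hxV => ?_⟩
  obtain ⟨B, ⟨hB, hxB⟩, huniq⟩ := hτ.2 x ((hπ.1 V hV).2 hxV)
  refine ⟨B, ⟨Finset.mem_filter.mpr ⟨hB, hπ.subset_of_refines hτπ hV hB hxB hxV⟩, hxB⟩, ?_⟩
  exact fun C hC => huniq C ⟨(Finset.mem_filter.mp hC.1).1, hC.2⟩

theorem Refines.restrict (h : Refines σ τ) (A : Finset α) :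
    Refines (restrictPart σ A) (restrictPart τ A) := by
  intro X hX
  simp only [restrictPart, Finset.mem_filter, Finset.mem_image] at hX
  obtain ⟨⟨B, hB, rfl⟩, hBA⟩ := hX
  obtain ⟨C, hC, hBC⟩ := h B hB
  have hBCA : B ∩ A ⊆ C ∩ A := Finset.inter_subset_inter_right hBC
  exact ⟨C ∩ A, Finset.mem_filter.mpr ⟨Finset.mem_image_of_mem _ hC, hBA.mono hBCA⟩, hBCA⟩

theorem biUnion_restrictPart (hτ : IsPartitionOn S τ) (hπ : IsPartitionOn S π)
    (hτπ : Refines τ π) : π.biUnion (restrictPart τ) = τ := by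
  ext B
  simp only [Finset.mem_biUnion]
  constructor
  · rintro ⟨V, hV, hB⟩
    exact restrictPart_subset hτ hπ hτπ hV hB
  · intro hB
    obtain ⟨V, hV, hBV⟩ := hτπ B hB
    refine ⟨V, hV, ?_⟩
    rw [restrictPart_eq_filter hτ hπ hτπ hV]
    exact Finset.mem_filter.mpr ⟨hB, hBV⟩

theorem restrictPart_self (hπ : IsPartitionOn S π) (hV : V ∈ π) : restrictPart π V = {V} := by
  rw [restrictPart_eq_filter hπ hπ (Refines.refl π) hV]
  ext B
  simp only [Finset.mem_filter, Finset.mem_singleton]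
  constructor
  · rintro ⟨hB, hBV⟩
    obtain ⟨x, hx⟩ := (hπ.1 B hB).1
    exact hπ.eq_of_mem hB hV hx (hBV hx)
  · rintro rfl
    exact ⟨hV, subset_rfl⟩

variable {f g : Finset α → Finset (Finset α)}

theorem IsPartitionOn.biUnion (hπ : IsPartitionOn S π)
    (hf : ∀ V ∈ π, IsPartitionOn V (f V)) : IsPartitionOn S (π.biUnion f) := by
  refine ⟨fun B hB => ?_, fun x hx => ?_⟩
  · obtain ⟨V, hV, hBf⟩ := Finset.mem_biUnion.mp hB
    obtain ⟨hBne, hBV⟩ := (hf V hV).1 B hBf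
    exact ⟨hBne, hBV.trans (hπ.1 V hV).2⟩
  · obtain ⟨V, ⟨hV, hxV⟩, hVuniq⟩ := hπ.2 x hx
    obtain ⟨B, ⟨hBf, hxB⟩, hBuniq⟩ := (hf V hV).2 x hxV
    refine ⟨B, ⟨Finset.mem_biUnion.mpr ⟨V, hV, hBf⟩, hxB⟩, ?_⟩
    rintro C ⟨hC, hxC⟩
    obtain ⟨W, hW, hCf⟩ := Finset.mem_biUnion.mp hC
    obtain rfl : W = V := hVuniq W ⟨hW, ((hf W hW).1 C hCf).2 hxC⟩
    exact hBuniq C ⟨hCf, hxC⟩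

theorem Refines.biUnion (h : ∀ V ∈ π, Refines (g V) (f V)) :
    Refines (π.biUnion g) (π.biUnion f) := by
  intro B hB
  obtain ⟨V, hV, hBg⟩ := Finset.mem_biUnion.mp hB
  obtain ⟨C, hC, hBC⟩ := h V hV B hBg
  exact ⟨C, Finset.mem_biUnion.mpr ⟨V, hV, hC⟩, hBC⟩

theorem restrictPart_biUnion (hπ : IsPartitionOn S π) (hf : ∀ V ∈ π, IsPartitionOn V (f V))
    (hV : V ∈ π) : restrictPart (π.biUnion f) V = f V := by
  have hfπ : Refines (π.biUnion f) π := fun B hB => by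
    obtain ⟨W, hW, hBf⟩ := Finset.mem_biUnion.mp hB
    exact ⟨W, hW, ((hf W hW).1 B hBf).2⟩
  rw [restrictPart_eq_filter (hπ.biUnion hf) hπ hfπ hV]
  ext B
  simp only [Finset.mem_filter, Finset.mem_biUnion]
  constructor
  · rintro ⟨⟨W, hW, hBf⟩, hBV⟩
    obtain ⟨x, hx⟩ := ((hf W hW).1 B hBf).1
    obtain rfl : W = V := hπ.eq_of_mem hW hV (((hf W hW).1 B hBf).2 hx) (hBV hx)
    exact hBf
  · intro hBf
    exact ⟨⟨V, hV, hBf⟩, ((hf V hV).1 B hBf).2⟩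

end Partition

section Interval

variable {α : Type*} [LinearOrder α] {S V : Finset α} {χ : α → Bool}
  {τ π : Finset (Finset α)} {f : Finset α → Finset (Finset α)}

theorem INCOn.restrict [DecidableEq α] (hτ : INCOn S χ τ) (hπ : IsPartitionOn S π)
    (hτπ : Refines τ π) (hV : V ∈ π) : INCOn V χ (restrictPart τ V) := by
  have hsub : restrictPart τ V ⊆ τ := restrictPart_subset hτ.1 hπ hτπ hV
  refine ⟨hτ.1.restrict hπ hτπ hV, fun A hA B hB => hτ.2.1 A (hsub hA) B (hsub hB), ?_⟩
  rintro B hB ⟨W, hW, hWB, hsW⟩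
  exact hτ.2.2 B (hsub hB) ⟨W, hsub hW, hWB, hsW⟩

theorem Noncrossing.biUnion [DecidableEq α] (hπ : Noncrossing π)
    (hf : ∀ V ∈ π, Noncrossing (f V)) (hfV : ∀ V ∈ π, ∀ B ∈ f V, B ⊆ V) :
    Noncrossing (π.biUnion f) := by
  intro B hB B' hB' hne
  obtain ⟨V, hV, hBf⟩ := Finset.mem_biUnion.mp hB
  obtain ⟨V', hV', hB'f⟩ := Finset.mem_biUnion.mp hB'
  by_cases hVV' : V = V'
  · subst hVV'
    exact hf V hV B hBf B' hB'f hne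
  · rintro ⟨s₁, r₁, s₂, r₂, hs₁, hs₂, hr₁, hr₂, h⟩
    have hBV := hfV V hV B hBf
    have hB'V' := hfV V' hV' B' hB'f
    exact hπ V hV V' hV' hVV' ⟨s₁, r₁, s₂, r₂, hBV hs₁, hBV hs₂, hB'V' hr₁, hB'V' hr₂, h⟩

/-- If `B ⊆ V` is nested inside a block `W ⊆ V'` with `V' ≠ V`, then all of `V` is nested
inside `W`: an element of `V` outside the span of `W` would make `V` and `V'` cross. -/
theorem IsInnerBlock.of_biUnion [DecidableEq α] (hπ : NCOn S π)
    (hfV : ∀ V ∈ π, ∀ B ∈ f V, B ⊆ V) {B : Finset α} (hV : V ∈ π) (hB : B ∈ f V)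
    (hBne : B.Nonempty) (h : IsInnerBlock (π.biUnion f) B) :
    IsInnerBlock (f V) B ∨ IsInnerBlock π V := by
  obtain ⟨W, hW, hWB, s, hs, t, ht, hst⟩ := h
  obtain ⟨V', hV', hWf⟩ := Finset.mem_biUnion.mp hW
  by_cases hVV' : V' = V
  · subst hVV'
    exact Or.inl ⟨W, hWf, hWB, s, hs, t, ht, hst⟩
  right
  have hWV' := hfV V' hV' W hWf
  have hBV := hfV V hV B hB
  have hVW : ∀ v ∈ V, v ∉ W := fun v hv hvW => hVV' (hπ.1.eq_of_mem hV' hV (hWV' hvW) hv)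
  obtain ⟨b, hb⟩ := hBne
  obtain ⟨hsb, hbt⟩ := hst b hb
  refine ⟨V', hV', hVV', s, hWV' hs, t, hWV' ht, fun v hv => ⟨?_, ?_⟩⟩
  · by_contra! hvs
    exact hπ.2 V hV V' hV' (Ne.symm hVV') ⟨v, s, b, t, hv, hBV hb, hWV' hs, hWV' ht,
      lt_of_le_of_ne hvs fun e => hVW v hv (e ▸ hs), hsb, hbt⟩
  · by_contra! htv
    exact hπ.2 V' hV' V hV hVV' ⟨s, b, t, v, hWV' hs, hWV' ht, hBV hb, hv, hsb, hbt,
      lt_of_le_of_ne htv fun e => hVW v hv (e ▸ ht)⟩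

theorem INCOn.biUnion [DecidableEq α] (hπ : INCOn S χ π) (hf : ∀ V ∈ π, INCOn V χ (f V)) :
    INCOn S χ (π.biUnion f) := by
  have hfV : ∀ V ∈ π, ∀ B ∈ f V, B ⊆ V := fun V hV B hB => ((hf V hV).1.1 B hB).2
  refine ⟨hπ.1.biUnion fun V hV => (hf V hV).1,
    hπ.2.1.biUnion (fun V hV => (hf V hV).2.1) hfV, fun B hB hinner k hk => ?_⟩
  obtain ⟨V, hV, hBf⟩ := Finset.mem_biUnion.mp hB
  rcases hinner.of_biUnion ⟨hπ.1, hπ.2.1⟩ hfV hV hBf ((hf V hV).1.1 B hBf).1 with hin | hin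
  · exact (hf V hV).2.2 B hBf hin k hk
  · exact hπ.2.2 V hV hin k (hfV V hV B hBf hk)

end Interval

section INClattice

variable {n : ℕ} {S V : Finset (Fin n)} {χ : Fin n → Bool} {σ ρ τ π : Finset (Finset (Fin n))}

theorem mem_INCset : τ ∈ INCset S χ ↔ INCOn S χ τ := by
  simp [INCset]

theorem restrictPart_mem_relIcc (hπ : IsPartitionOn S π) (hρπ : Refines ρ π) (hV : V ∈ π)
    (hτ : τ ∈ relIcc (INCset S χ) Refines σ ρ) :
    restrictPart τ V ∈ relIcc (INCset V χ) Refines (restrictPart σ V) (restrictPart ρ V) := by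
  obtain ⟨hτS, hστ, hτρ⟩ := mem_relIcc.mp hτ
  exact mem_relIcc.mpr ⟨mem_INCset.mpr ((mem_INCset.mp hτS).restrict hπ (hτρ.trans hρπ) hV),
    hστ.restrict V, hτρ.restrict V⟩

theorem biUnion_mem_relIcc {f : Finset (Fin n) → Finset (Finset (Fin n))} (hπ : INCOn S χ π)
    (hσ : IsPartitionOn S σ) (hρ : IsPartitionOn S ρ) (hσπ : Refines σ π) (hρπ : Refines ρ π)
    (hf : ∀ V ∈ π, f V ∈ relIcc (INCset V χ) Refines (restrictPart σ V) (restrictPart ρ V)) :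
    π.biUnion f ∈ relIcc (INCset S χ) Refines σ ρ := by
  have hf' := fun V hV => mem_relIcc.mp (hf V hV)
  have hσf : Refines (π.biUnion (restrictPart σ)) (π.biUnion f) :=
    Refines.biUnion fun V hV => (hf' V hV).2.1
  have hfρ : Refines (π.biUnion f) (π.biUnion (restrictPart ρ)) :=
    Refines.biUnion fun V hV => (hf' V hV).2.2
  rw [biUnion_restrictPart hσ hπ.1 hσπ] at hσf
  rw [biUnion_restrictPart hρ hπ.1 hρπ] at hfρ
  exact mem_relIcc.mpr ⟨mem_INCset.mpr (hπ.biUnion fun V hV => mem_INCset.mp (hf' V hV).1),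
    hσf, hfρ⟩

theorem sum_relIcc_prod_restrictPart (hπ : INCOn S χ π) (hσ : IsPartitionOn S σ)
    (hρ : IsPartitionOn S ρ) (hσρ : Refines σ ρ) (hρπ : Refines ρ π)
    (g : Finset (Fin n) → Finset (Finset (Fin n)) → ℂ) :
    ∑ τ ∈ relIcc (INCset S χ) Refines σ ρ, ∏ V ∈ π, g V (restrictPart τ V) =
      ∏ V ∈ π, ∑ τ ∈ relIcc (INCset V χ) Refines (restrictPart σ V) (restrictPart ρ V), g V τ := by
  have hσπ := hσρ.trans hρπ
  let glue (p : (V : Finset (Fin n)) → V ∈ π → Finset (Finset (Fin n))) (V : Finset (Fin n)) :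
      Finset (Finset (Fin n)) :=
    if hV : V ∈ π then p V hV else ∅
  set I := fun V => relIcc (INCset V χ) Refines (restrictPart σ V) (restrictPart ρ V)
  have hglue : ∀ p ∈ π.pi I, ∀ V ∈ π, glue p V ∈ I V :=
    fun p hp V hV => by simpa only [glue, dif_pos hV] using Finset.mem_pi.mp hp V hV
  rw [Finset.prod_sum]
  refine Finset.sum_nbij' (fun τ V _ => restrictPart τ V) (fun p => π.biUnion (glue p))
    (fun τ hτ => Finset.mem_pi.mpr fun V hV => restrictPart_mem_relIcc hπ.1 hρπ hV hτ)
    (fun p hp => biUnion_mem_relIcc hπ hσ hρ hσπ hρπ (hglue p hp)) (fun τ hτ => ?_)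
    (fun p hp => ?_) (fun τ _ => (Finset.prod_attach π fun V => g V (restrictPart τ V)).symm)
  · obtain ⟨hτS, -, hτρ⟩ := mem_relIcc.mp hτ
    conv_rhs => rw [← biUnion_restrictPart (mem_INCset.mp hτS).1 hπ.1 (hτρ.trans hρπ)]
    exact Finset.biUnion_congr rfl fun V hV => dif_pos hV
  · funext V hV
    have hpart : ∀ W ∈ π, IsPartitionOn W (glue p W) :=
      fun W hW => (mem_INCset.mp (mem_relIcc.mp (hglue p hp W hW)).1).1
    exact (restrictPart_biUnion hπ.1 hpart hV).trans (dif_pos hV)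

theorem prod_boole_restrictPart_eq (hσ : IsPartitionOn S σ) (hρ : IsPartitionOn S ρ)
    (hπ : IsPartitionOn S π) (hσπ : Refines σ π) (hρπ : Refines ρ π) :
    ∏ V ∈ π, (if restrictPart σ V = restrictPart ρ V then 1 else 0 : ℂ) =
      if σ = ρ then 1 else 0 := by
  rw [Finset.prod_boole]
  congr 1
  refine propext ⟨fun h => ?_, fun h V _ => h ▸ rfl⟩
  rw [← biUnion_restrictPart hσ hπ hσπ, ← biUnion_restrictPart hρ hπ hρπ]
  exact Finset.biUnion_congr rfl h

theorem sum_relIcc_prod_mobius_restrictPart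
    {μ' : Finset (Fin n) → Finset (Finset (Fin n)) → Finset (Finset (Fin n)) → ℂ}
    (hμ' : ∀ V ∈ π, IsMobiusOn (INCset V χ) Refines (μ' V)) (hπ : INCOn S χ π)
    (hσ : INCOn S χ σ) (hρ : ρ ∈ relIcc (INCset S χ) Refines σ π) :
    ∑ τ ∈ relIcc (INCset S χ) Refines σ ρ, ∏ V ∈ π, μ' V (restrictPart σ V) (restrictPart τ V) =
      if σ = ρ then 1 else 0 := by
  obtain ⟨hρS, hσρ, hρπ⟩ := mem_relIcc.mp hρ
  have hρ := mem_INCset.mp hρS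
  have hσπ := hσρ.trans hρπ
  rw [sum_relIcc_prod_restrictPart hπ hσ.1 hρ.1 hσρ hρπ,
    ← prod_boole_restrictPart_eq hσ.1 hρ.1 hπ.1 hσπ hρπ]
  exact Finset.prod_congr rfl fun V hV => (hμ' V hV).sum_relIcc_left
    (mem_INCset.mpr (hσ.restrict hπ.1 hσπ hV)) (mem_INCset.mpr (hρ.restrict hπ.1 hρπ hV))
    (hσρ.restrict V)

end INClattice

theorem mobius_INC_factorizes_general {n : ℕ} (χ : Fin n → Bool)
    (π σ : Finset (Finset (Fin n)))
    (hπ : INCOn Finset.univ χ π) (hσ : INCOn Finset.univ χ σ) (hle : Refines σ π)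
    (μ : Finset (Finset (Fin n)) → Finset (Finset (Fin n)) → ℂ)
    (hμ : IsMobiusOn (INCset Finset.univ χ) Refines μ)
    (μ' : Finset (Fin n) → Finset (Finset (Fin n)) → Finset (Finset (Fin n)) → ℂ)
    (hμ' : ∀ V ∈ π, IsMobiusOn (INCset V χ) Refines (μ' V)) :
    μ σ π = ∏ V ∈ π, μ' V (restrictPart σ V) {V} := by
  calc μ σ π = ∏ V ∈ π, μ' V (restrictPart σ V) (restrictPart π V) :=
        hμ.eq_of_sum_relIcc_eq_ite (fun P _ => Refines.refl P)
          (fun _ _ _ _ _ _ => Refines.trans) (mem_INCset.mpr hσ) (mem_INCset.mpr hπ) hle _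
          fun _ hρ => sum_relIcc_prod_mobius_restrictPart hμ' hπ hσ hρ
    _ = ∏ V ∈ π, μ' V (restrictPart σ V) {V} :=
        Finset.prod_congr rfl fun V hV => by rw [restrictPart_self hπ.1 hV]

/-- the Möbius function of the lattice INC(χ) factorizes over the
blocks of π: μ_INC(σ, π) = ∏_{V ∈ π} μ_INC(σ|_V, 1_V), where the factor for the
block V is computed in the lattice INC(χ|_V). -/
theorem mobius_INC_factorizes {n : ℕ} (hn : 0 < n) (χ : Fin n → Bool)
    (hχ1 : χ ⟨0, hn⟩ = true) (hχn : χ ⟨n - 1, Nat.sub_lt hn one_pos⟩ = true)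
    (π σ : Finset (Finset (Fin n)))
    (hπ : INCOn Finset.univ χ π) (hσ : INCOn Finset.univ χ σ) (hle : Refines σ π)
    (μ : Finset (Finset (Fin n)) → Finset (Finset (Fin n)) → ℂ)
    (hμ : IsMobiusOn (INCset Finset.univ χ) Refines μ)
    (μ' : Finset (Fin n) → Finset (Finset (Fin n)) → Finset (Finset (Fin n)) → ℂ)
    (hμ' : ∀ V ∈ π, IsMobiusOn (INCset V χ) Refines (μ' V)) :
    μ σ π = ∏ V ∈ π, μ' V (restrictPart σ V) {V} :=
  mobius_INC_factorizes_general χ π σ hπ hσ hle μ hμ μ' hμ'
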